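/- Let C_a, C_t, N_a, s be positive reals and J ≥ 2 a natural number. Suppose C_a > C_t and 0 < x < (C_t/C_a)^{1/(2(J−1))}, and set l̃ = (J+1)/2 + log(C_a/C_t)/(4·log x). Then 1 < l̃ < (J+1)/2, and for every integer l with 1 ≤ l ≤ J one has γ_x(l) ≤ max(γ_x(⌊l̃⌋), γ_x(⌈l̃⌉)) (Proposition 1, Case III, first subcase). -/

import Mathlib

/-!
With `L = log x`, the interference part of the denominator of `γ_x` factors as
`C_a x^{2(J-l)} + C_t x^{2(l-1)} = 2 C_t x^{2(l̃-1)} cosh (2 L (l - l̃))`,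
so `γ_x(l)` is a decreasing function of `|l - l̃|`. Any integer `l` lies below `⌊l̃⌋` or above
`⌈l̃⌉`, and the corresponding rounding of `l̃` is then at least as close to `l̃` as `l`.
The bounds on `l̃` follow from `log (C_a/C_t) > 0 > log x` and `2 (J-1) log x < log (C_t/C_a)`.
-/

open Real

noncomputable def snr (Ca Ct Na s : ℝ) (J : ℕ) (x l : ℝ) : ℝ :=
  Ca * Ct * Na * x ^ (2 * ((J : ℝ) - 1)) /
    (s * Ca * x ^ (2 * ((J : ℝ) - l)) + s * Ct * x ^ (2 * (l - 1)) + s ^ 2)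

theorem Int.abs_floor_sub_le_or_abs_ceil_sub_le {R : Type*} [CommRing R] [LinearOrder R]
    [IsStrictOrderedRing R] [FloorRing R] (r : R) (l : ℤ) :
    |(⌊r⌋ : R) - r| ≤ |(l : R) - r| ∨ |(⌈r⌉ : R) - r| ≤ |(l : R) - r| := by
  rcases le_or_gt l ⌊r⌋ with hl | hl
  · left
    have hlr : (l : R) ≤ ⌊r⌋ := by exact_mod_cast hl
    rw [abs_of_nonpos (sub_nonpos.2 (Int.floor_le r)), abs_of_nonpos (by linarith [Int.floor_le r])]
    linarith
  · right
    have hlr : (⌈r⌉ : R) ≤ l := by exact_mod_cast (Int.ceil_le_floor_add_one r).trans hl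
    rw [abs_of_nonneg (sub_nonneg.2 (Int.le_ceil r)), abs_of_nonneg (by linarith [Int.le_ceil r])]
    linarith

-- The paper's `l̃`.
noncomputable def snrPeak (Ca Ct : ℝ) (J : ℕ) (x : ℝ) : ℝ :=
  ((J : ℝ) + 1) / 2 + Real.log (Ca / Ct) / (4 * Real.log x)

theorem add_rpow_eq_mul_cosh {Ca Ct x : ℝ} (hCa : 0 < Ca) (hCt : 0 < Ct) (hx0 : 0 < x)
    (hx1 : x ≠ 1) (J : ℕ) (l : ℝ) :
    Ca * x ^ (2 * ((J : ℝ) - l)) + Ct * x ^ (2 * (l - 1)) =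
      2 * Ct * x ^ (2 * (snrPeak Ca Ct J x - 1)) * cosh (2 * log x * (l - snrPeak Ca Ct J x)) := by
  have hL : log x ≠ 0 := log_ne_zero_of_pos_of_ne_one hx0 hx1
  have hCa_eq : Ca = Ct * exp (4 * log x * (snrPeak Ca Ct J x - ((J : ℝ) + 1) / 2)) := by
    rw [snrPeak, add_sub_cancel_left, mul_div_cancel₀ _ (mul_ne_zero four_ne_zero hL),
      exp_log (div_pos hCa hCt), mul_div_cancel₀ _ hCt.ne']
  generalize snrPeak Ca Ct J x = p at hCa_eq ⊢
  subst hCa_eq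
  simp only [rpow_def_of_pos hx0, cosh_eq]
  have hfar : exp (4 * log x * (p - ((J : ℝ) + 1) / 2)) * exp (log x * (2 * ((J : ℝ) - l))) =
      exp (log x * (2 * (p - 1))) * exp (-(2 * log x * (l - p))) := by
    rw [← exp_add, ← exp_add]; ring_nf
  have hnear : exp (log x * (2 * (l - 1))) =
      exp (log x * (2 * (p - 1))) * exp (2 * log x * (l - p)) := by
    rw [← exp_add]; ring_nf
  rw [mul_assoc Ct, hfar, hnear]
  ring

theorem snr_le_snr_of_abs_sub_le {Ca Ct Na s x : ℝ} (hCa : 0 < Ca) (hCt : 0 < Ct) (hNa : 0 ≤ Na)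
    (hs : 0 < s) (hx0 : 0 < x) (hx1 : x ≠ 1) (J : ℕ) {l m : ℝ}
    (h : |m - snrPeak Ca Ct J x| ≤ |l - snrPeak Ca Ct J x|) :
    snr Ca Ct Na s J x l ≤ snr Ca Ct Na s J x m := by
  simp only [snr, mul_assoc s, ← mul_add, add_rpow_eq_mul_cosh hCa hCt hx0 hx1]
  have hcosh : cosh (2 * log x * (m - snrPeak Ca Ct J x)) ≤
      cosh (2 * log x * (l - snrPeak Ca Ct J x)) := by
    rw [cosh_le_cosh, abs_mul, abs_mul _ (l - _)]
    exact mul_le_mul_of_nonneg_left h (abs_nonneg _)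
  apply div_le_div_of_nonneg_left (by positivity) (by positivity)
  gcongr

theorem one_lt_snrPeak {Ca Ct x : ℝ} {J : ℕ} (hJ : 2 ≤ J) (hL : log x < 0)
    (hx : log x < 1 / (2 * ((J : ℝ) - 1)) * log (Ct / Ca)) :
    1 < snrPeak Ca Ct J x := by
  have hJ' : (0 : ℝ) < 2 * ((J : ℝ) - 1) := by
    have : (2 : ℝ) ≤ J := by exact_mod_cast hJ
    linarith
  rw [one_div_mul_eq_div, lt_div_iff₀ hJ', ← neg_neg (log (Ct / Ca)), ← log_inv, inv_div] at hx
  have : (1 - (J : ℝ)) / 2 < log (Ca / Ct) / (4 * log x) := by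
    rw [lt_div_iff_of_neg (by linarith)]
    linarith
  rw [snrPeak]
  linarith

theorem snrPeak_lt {Ca Ct x : ℝ} {J : ℕ} (hCt : 0 < Ct) (hCtCa : Ct < Ca) (hL : log x < 0) :
    snrPeak Ca Ct J x < ((J : ℝ) + 1) / 2 := by
  have : log (Ca / Ct) / (4 * log x) < 0 :=
    div_neg_of_pos_of_neg (log_pos ((one_lt_div hCt).2 hCtCa)) (by linarith)
  rw [snrPeak]
  linarith

/-- Proposition 1, Case III, first subcase: if `C_a > C_t` and
`0 < x < (C_t/C_a)^{1/(2(J−1))}`, then `l̃ = (J+1)/2 + log(C_a/C_t)/(4·log x)` satisfies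
`1 < l̃ < (J+1)/2`, and the received SNR at any integer AIRS location `1 ≤ l ≤ J` is at most
the larger of the SNRs at `⌊l̃⌋` and `⌈l̃⌉`. -/
theorem stmt_7 (Ca Ct Na s : ℝ) (hCa : 0 < Ca) (hCt : 0 < Ct) (hNa : 0 < Na) (hs : 0 < s)
    (J : ℕ) (hJ : 2 ≤ J) (x : ℝ)
    (hCaCt : Ct < Ca)
    (hx0 : 0 < x) (hxub : x < (Ct / Ca) ^ (1 / (2 * ((J : ℝ) - 1)))) :
    (1 < ((J : ℝ) + 1) / 2 + Real.log (Ca / Ct) / (4 * Real.log x)) ∧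
    (((J : ℝ) + 1) / 2 + Real.log (Ca / Ct) / (4 * Real.log x) < ((J : ℝ) + 1) / 2) ∧
    ∀ l : ℤ, 1 ≤ l → l ≤ (J : ℤ) →
      snr Ca Ct Na s J x (l : ℝ) ≤
        max (snr Ca Ct Na s J x ((⌊((J : ℝ) + 1) / 2 + Real.log (Ca / Ct) / (4 * Real.log x)⌋ : ℤ) : ℝ))
            (snr Ca Ct Na s J x ((⌈((J : ℝ) + 1) / 2 + Real.log (Ca / Ct) / (4 * Real.log x)⌉ : ℤ) : ℝ)) := by
  have hJ' : (0 : ℝ) < 1 / (2 * ((J : ℝ) - 1)) := by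
    have : (2 : ℝ) ≤ J := by exact_mod_cast hJ
    exact one_div_pos.2 (by linarith)
  have hx1 : x < 1 :=
    hxub.trans (rpow_lt_one (div_pos hCt hCa).le ((div_lt_one hCa).2 hCaCt) hJ')
  have hL : log x < 0 := log_neg hx0 hx1
  refine ⟨one_lt_snrPeak hJ hL ((lt_rpow_iff_log_lt hx0 (div_pos hCt hCa)).1 hxub),
    snrPeak_lt hCt hCaCt hL, fun l _ _ => ?_⟩
  rcases Int.abs_floor_sub_le_or_abs_ceil_sub_le (snrPeak Ca Ct J x) l with h | h
  · exact (snr_le_snr_of_abs_sub_le hCa hCt hNa.le hs hx0 hx1.ne J h).trans (le_max_left _ _)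
  · exact (snr_le_snr_of_abs_sub_le hCa hCt hNa.le hs hx0 hx1.ne J h).trans (le_max_right _ _)
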